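/- Let E be a 2-coloured graph and let C be a complete collection of squares in E. Then for every path x ∈ E* there is a unique C-compatible coloured-graph morphism λ_x : E_{2,d*(x)} → E such that x traverses λ_x. -/

import Mathlib

/-- A 2-coloured graph: a directed graph `(E⁰, E¹, r, s)` together with a colour map
`c : E¹ → Bool` (`false` is the colour `c₁`, `true` the colour `c₂`). -/
structure TwoColouredGraph where
  V : Type
  Edge : Type
  r : Edge → V
  s : Edge → V
  c : Edge → Bool

/-- A coloured-graph morphism: a graph morphism preserving colours. -/
structure CGMor (F E : TwoColouredGraph) where
  onV : F.V → E.V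
  onE : F.Edge → E.Edge
  map_r : ∀ e, E.r (onE e) = onV (F.r e)
  map_s : ∀ e, E.s (onE e) = onV (F.s e)
  map_c : ∀ e, E.c (onE e) = F.c e

/-- `x` is a path (finite sequence of composable edges) with range `v`;
vertices are regarded as the paths of length 0. -/
def IsPathFrom (E : TwoColouredGraph) (v : E.V) (x : List E.Edge) : Prop :=
  (∀ e ∈ x.head?, E.r e = v) ∧ List.Chain' (fun e f => E.s e = E.r f) x

/-- The standard basis vectors `e₁, e₂` of `ℕ²`, indexed by colour. -/
def vec : Bool → ℕ × ℕ
  | false => (1, 0)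
  | true => (0, 1)

theorem le_add_vec (p : ℕ × ℕ) (i : Bool) : p ≤ p + vec i :=
  Prod.le_def.mpr ⟨Nat.le_add_right _ _, Nat.le_add_right _ _⟩

theorem zero_le2 (p : ℕ × ℕ) : (0 : ℕ × ℕ) ≤ p :=
  Prod.le_def.mpr ⟨Nat.zero_le _, Nat.zero_le _⟩

theorem le_self_add2 (p q : ℕ × ℕ) : p ≤ p + q :=
  Prod.le_def.mpr ⟨Nat.le_add_right _ _, Nat.le_add_right _ _⟩

/-- The model 2-coloured graph `E_{2,m}`: vertices `{n ∈ ℕ² : n ≤ m}` and, whenever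
`n, n + eᵢ ≤ m`, an edge `n + vᵢ` of colour `i` from `n + eᵢ` to `n`. -/
def model2 (m : ℕ × ℕ) : TwoColouredGraph where
  V := {n : ℕ × ℕ // n ≤ m}
  Edge := {p : (ℕ × ℕ) × Bool // p.1 + vec p.2 ≤ m}
  r e := ⟨e.1.1, (le_add_vec e.1.1 e.1.2).trans e.2⟩
  s e := ⟨e.1.1 + vec e.1.2, e.2⟩
  c e := e.1.2

/-- The degree `d*(x) ∈ ℕ²` of a path: the vector counting the edges of each colour. -/
def deg2 (E : TwoColouredGraph) (x : List E.Edge) : ℕ × ℕ :=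
  (x.map fun e => vec (E.c e)).sum

theorem deg2_take_add_drop (E : TwoColouredGraph) (x : List E.Edge) (n : ℕ) :
    deg2 E (x.take n) + deg2 E (x.drop n) = deg2 E x := by
  unfold deg2
  rw [← List.sum_append, ← List.map_append, List.take_append_drop]

theorem deg2_take_le (E : TwoColouredGraph) (x : List E.Edge) (n : ℕ) :
    deg2 E (x.take n) ≤ deg2 E x :=
  (le_self_add2 _ _).trans_eq (deg2_take_add_drop E x n)

theorem deg2_take_add_vec_le (E : TwoColouredGraph) (x : List E.Edge) (n : ℕ)
    (hn : n < x.length) :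
    deg2 E (x.take n) + vec (E.c (x.get ⟨n, hn⟩)) ≤ deg2 E x := by
  have hdrop : deg2 E (x.drop n) = vec (E.c (x.get ⟨n, hn⟩)) + deg2 E (x.drop (n + 1)) := by
    rw [deg2, deg2, List.drop_eq_getElem_cons hn, List.map_cons, List.sum_cons,
      List.get_eq_getElem]
  calc deg2 E (x.take n) + vec (E.c (x.get ⟨n, hn⟩))
      ≤ deg2 E (x.take n) + (vec (E.c (x.get ⟨n, hn⟩)) + deg2 E (x.drop (n + 1))) := by
        rw [← add_assoc]; exact le_self_add2 _ _
    _ = deg2 E x := by rw [← hdrop, deg2_take_add_drop]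

/-- `x` (a path with range `v`) traverses the coloured-graph morphism `λ : E_{2,m} → E`. -/
def Traverses2 (E : TwoColouredGraph) {m : ℕ × ℕ} (lam : CGMor (model2 m) E)
    (v : E.V) (x : List E.Edge) : Prop :=
  ∃ hd : deg2 E x = m,
    lam.onV ⟨0, zero_le2 m⟩ = v ∧
    ∀ (n : ℕ) (hn : n < x.length),
      lam.onE ⟨(deg2 E (x.take n), E.c (x.get ⟨n, hn⟩)),
        hd ▸ deg2_take_add_vec_le E x n hn⟩ = x.get ⟨n, hn⟩

/-- A square in `E`: a coloured-graph morphism `φ : E_{2,e₁+e₂} → E`. -/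
abbrev Square2 (E : TwoColouredGraph) := CGMor (model2 (1, 1)) E

/-- The edge `vᵢ` of `E_{2,e₁+e₂}` with range `0`, of colour `i`. -/
def sqEdge0 (i : Bool) : (model2 (1, 1)).Edge :=
  ⟨((0, 0), i), by cases i <;> decide⟩

/-- The edge `eᵢ + vⱼ` of `E_{2,e₁+e₂}` with range `eᵢ`, of the other colour `j = ¬i`. -/
def sqEdge1 (i : Bool) : (model2 (1, 1)).Edge :=
  ⟨(vec i, !i), by cases i <;> decide⟩

/-- A collection `C` of squares in `E` is complete if each two-coloured path of length 2 in `E`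
factors through a unique square in `C`. -/
def IsComplete2 (E : TwoColouredGraph) (C : Set (Square2 E)) : Prop :=
  ∀ x₁ x₂ : E.Edge, E.s x₁ = E.r x₂ → E.c x₁ ≠ E.c x₂ →
    ∃! φ : Square2 E, φ ∈ C ∧ x₁ = φ.onE (sqEdge0 (E.c x₁)) ∧ x₂ = φ.onE (sqEdge1 (E.c x₁))

theorem occ_vertex_le {z n m : ℕ × ℕ} (hz : z ≤ (1, 1)) (h : n + (1, 1) ≤ m) : z + n ≤ m :=
  le_trans (add_le_add_left hz n) (le_of_eq (add_comm _ _) |>.trans h)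

theorem occ_edge_le {u n m : ℕ × ℕ} {i : Bool} (hz : u + vec i ≤ (1, 1))
    (h : n + (1, 1) ≤ m) : (u + n) + vec i ≤ m := by
  rw [add_right_comm]
  exact occ_vertex_le hz h

/-- The square `φ` occurs in `λ : E_{2,m} → E` if `φ` is the translation of `λ` by some
`n ∈ ℕ²`, i.e. `φ(x) = λ(x + n)` on vertices and edges. -/
def Occurs2 {E : TwoColouredGraph} {m : ℕ × ℕ} (φ : Square2 E)
    (lam : CGMor (model2 m) E) : Prop :=
  ∃ (n : ℕ × ℕ) (h : n + (1, 1) ≤ m),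
    (∀ z : (model2 (1, 1)).V, lam.onV ⟨z.1 + n, occ_vertex_le z.2 h⟩ = φ.onV z) ∧
    (∀ e : (model2 (1, 1)).Edge,
      lam.onE ⟨(e.1.1 + n, e.1.2), occ_edge_le e.2 h⟩ = φ.onE e)

/-- `λ` is `C`-compatible if every square occurring in `λ` belongs to `C`. -/
def Compatible2 {E : TwoColouredGraph} (C : Set (Square2 E)) {m : ℕ × ℕ}
    (lam : CGMor (model2 m) E) : Prop :=
  ∀ φ : Square2 E, Occurs2 φ lam → φ ∈ C

/-- The restriction `λ|_{E_{2,p}}` of `λ : E_{2,q} → E` for `p ≤ q`. -/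
def restrict2 {E : TwoColouredGraph} {q : ℕ × ℕ} (lam : CGMor (model2 q) E)
    (p : ℕ × ℕ) (h : p ≤ q) : CGMor (model2 p) E where
  onV z := lam.onV ⟨z.1, z.2.trans h⟩
  onE e := lam.onE ⟨e.1, e.2.trans h⟩
  map_r e := lam.map_r _
  map_s e := lam.map_s _
  map_c e := lam.map_c _

/-- The translated restriction `λ|*_{E_{2,[p,p+n]}} : E_{2,n} → E`, `a ↦ λ(p + a)`,
of `λ : E_{2,q} → E` where `p + n ≤ q`. -/
def starRestrict2 {E : TwoColouredGraph} {q : ℕ × ℕ} (lam : CGMor (model2 q) E)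
    (p n : ℕ × ℕ) (h : p + n ≤ q) : CGMor (model2 n) E where
  onV z := lam.onV ⟨p + z.1, (add_le_add_right z.2 p).trans h⟩
  onE e := lam.onE ⟨(p + e.1.1, e.1.2), by
    rw [add_assoc]; exact (add_le_add_right e.2 p).trans h⟩
  map_r e := lam.map_r _
  map_s e := by
    refine (lam.map_s _).trans ?_
    exact congrArg lam.onV (Subtype.ext (add_assoc p e.1.1 (vec e.1.2)))
  map_c e := lam.map_c _

/-- The model graph `E_{2,0}` has no edges. -/
theorem model2_zero_no_edge (e : (model2 (0, 0)).Edge) : False := by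
  obtain ⟨⟨u, i⟩, h⟩ := e
  rw [Prod.le_def] at h
  cases i <;> simp [vec] at h

/-- The identity morphism `λ_v : E_{2,0} → E`, `λ_v(0) = v`. -/
def idMor2 (E : TwoColouredGraph) (v : E.V) : CGMor (model2 (0, 0)) E where
  onV _ := v
  onE e := (model2_zero_no_edge e).elim
  map_r e := (model2_zero_no_edge e).elim
  map_s e := (model2_zero_no_edge e).elim
  map_c e := (model2_zero_no_edge e).elim

theorem idMor2_compatible (E : TwoColouredGraph) (C : Set (Square2 E)) (v : E.V) :
    Compatible2 C (idMor2 E v) := by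
  rintro φ ⟨n, h, -, -⟩
  exact absurd h.2 (by simp)

/-- The set `Λ = ⋃_{m ∈ ℕ²} Λ^m` of all `C`-compatible coloured-graph morphisms into `E`. -/
def Lam2 (E : TwoColouredGraph) (C : Set (Square2 E)) : Type :=
  Σ m : ℕ × ℕ, {lam : CGMor (model2 m) E // Compatible2 C lam}

/-- The degree `d(λ) = m` of `λ : E_{2,m} → E`. -/
def Lam2.deg {E : TwoColouredGraph} {C : Set (Square2 E)} (α : Lam2 E C) : ℕ × ℕ := α.1

/-- The range `r(λ) = λ(0)`. -/
def Lam2.rV {E : TwoColouredGraph} {C : Set (Square2 E)} (α : Lam2 E C) : E.V :=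
  α.2.1.onV ⟨0, zero_le2 α.1⟩

/-- The source `s(λ) = λ(d(λ))`. -/
def Lam2.sV {E : TwoColouredGraph} {C : Set (Square2 E)} (α : Lam2 E C) : E.V :=
  α.2.1.onV ⟨α.1, le_refl α.1⟩

/-- The identity `λ_v` as an element of `Λ`. -/
def idLam2 (E : TwoColouredGraph) (C : Set (Square2 E)) (v : E.V) : Lam2 E C :=
  ⟨(0, 0), idMor2 E v, idMor2_compatible E C v⟩

/-- `γ` is the composition `μν`, i.e. `d(γ) = d(μ) + d(ν)`, `γ|_{E_{2,d(μ)}} = μ` and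
`γ|*_{E_{2,[d(μ), d(μ)+d(ν)]}} = ν`. -/
def IsComp2 {E : TwoColouredGraph} {C : Set (Square2 E)} (α β γ : Lam2 E C) : Prop :=
  ∃ h : γ.1 = α.1 + β.1,
    restrict2 γ.2.1 α.1 ((le_self_add2 α.1 β.1).trans_eq h.symm) = α.2.1 ∧
    starRestrict2 γ.2.1 α.1 β.1 h.ge = β.2.1

/-!
Induction on the path `x = e x'`, with `i` the colour of `e`. Translating a `C`-compatible `λ`
traversed by `x` by `eᵢ` gives a `C`-compatible morphism traversed by `x'`, so by induction only
the row `{p | pᵢ = 0}` of `λ` remains to be determined. Its colour-`i` edges `f₀ = e, f₁, …` are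
forced one at a time: `fₜ` followed by the `t`-th colour-`¬i` edge `gₜ` of the translated part is
a two-coloured path, so completeness leaves exactly one square of `C` on it, and `fₜ₊₁` is the
side of that square opposite to `gₜ`. Run as a construction, the same recursion extends the
morphism traversed by `x'` to one traversed by `x`.
-/

@[ext] theorem CGMor.ext {F E : TwoColouredGraph} {a b : CGMor F E}
    (hV : a.onV = b.onV) (hE : a.onE = b.onE) : a = b := by
  cases a; cases b; cases hV; cases hE; rfl

theorem CGMor.onV_congr {E : TwoColouredGraph} {m : ℕ × ℕ} (μ : CGMor (model2 m) E)
    {z z' : (model2 m).V} (h : z.1 = z'.1) : μ.onV z = μ.onV z' :=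
  congrArg μ.onV (Subtype.ext h)

theorem CGMor.onE_congr {E : TwoColouredGraph} {m : ℕ × ℕ} (μ : CGMor (model2 m) E)
    {ed ed' : (model2 m).Edge} (h : ed.1 = ed'.1) : μ.onE ed = μ.onE ed' :=
  congrArg μ.onE (Subtype.ext h)

section Coordinates

def coord (p : ℕ × ℕ) : Bool → ℕ
  | false => p.1
  | true => p.2

@[simp] theorem coord_add (p q : ℕ × ℕ) (b : Bool) :
    coord (p + q) b = coord p b + coord q b := by
  cases b <;> rfl

@[simp] theorem coord_nsmul (t : ℕ) (p : ℕ × ℕ) (b : Bool) :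
    coord (t • p) b = t * coord p b := by
  cases b <;> rfl

@[simp] theorem coord_one_one (b : Bool) : coord (1, 1) b = 1 := by
  cases b <;> rfl

@[simp] theorem coord_vec_self (i : Bool) : coord (vec i) i = 1 := by
  cases i <;> rfl

@[simp] theorem coord_vec_not (i : Bool) : coord (vec i) (!i) = 0 := by
  cases i <;> rfl

@[simp] theorem coord_vec_not_self (i : Bool) : coord (vec (!i)) i = 0 := by
  cases i <;> rfl

theorem le_iff_coord (i : Bool) {p q : ℕ × ℕ} :
    p ≤ q ↔ coord p i ≤ coord q i ∧ coord p (!i) ≤ coord q (!i) := by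
  cases i <;> simp [Prod.le_def, coord, and_comm]

theorem eq_iff_coord (i : Bool) {p q : ℕ × ℕ} :
    p = q ↔ coord p i = coord q i ∧ coord p (!i) = coord q (!i) := by
  cases i <;> simp [Prod.ext_iff, coord, and_comm]

theorem vec_add_vec_not (i : Bool) : vec i + vec (!i) = (1, 1) := by
  cases i <;> rfl

theorem eq_nsmul_vec_not_of_not_vec_le {i : Bool} {p : ℕ × ℕ} (h : ¬vec i ≤ p) :
    p = coord p (!i) • vec (!i) := by
  simp only [le_iff_coord i, eq_iff_coord i, coord_nsmul, coord_vec_self, coord_vec_not,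
    coord_vec_not_self] at h ⊢
  omega

theorem vec_le_or_eq_nsmul_vec_not (i : Bool) (p : ℕ × ℕ) :
    vec i ≤ p ∨ p = coord p (!i) • vec (!i) :=
  or_iff_not_imp_left.2 eq_nsmul_vec_not_of_not_vec_le

theorem not_vec_le_nsmul_vec_not (i : Bool) (t : ℕ) : ¬vec i ≤ t • vec (!i) := by
  simp only [le_iff_coord i, coord_nsmul, coord_vec_self, coord_vec_not_self]
  omega

theorem exists_vec_le_of_ne_zero {p : ℕ × ℕ} (h : p ≠ 0) : ∃ b, vec b ≤ p := by
  obtain ⟨a, c⟩ := p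
  rcases Nat.eq_zero_or_pos a with rfl | ha
  · refine ⟨true, Prod.mk_le_mk.2 ⟨le_rfl, Nat.pos_of_ne_zero ?_⟩⟩
    rintro rfl
    exact h rfl
  · exact ⟨false, Prod.mk_le_mk.2 ⟨ha, Nat.zero_le c⟩⟩

theorem nsmul_vec_le {b : Bool} {t : ℕ} {m : ℕ × ℕ} (ht : t ≤ coord m b) :
    t • vec b ≤ m := by
  simp only [le_iff_coord b, coord_nsmul, coord_vec_self, coord_vec_not]
  omega

theorem nsmul_vec_not_add_le_iff {i : Bool} {t : ℕ} {k m : ℕ × ℕ} (hk : coord k i ≤ 1) :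
    t • vec (!i) + k ≤ vec i + m ↔ t + coord k (!i) ≤ coord m (!i) := by
  simp only [le_iff_coord i, coord_add, coord_nsmul, coord_vec_self, coord_vec_not,
    coord_vec_not_self]
  omega

theorem coord_not_le_of_le_vec_add {i : Bool} {p m : ℕ × ℕ} (h : p ≤ vec i + m) :
    coord p (!i) ≤ coord m (!i) := by
  simp only [le_iff_coord i, coord_add, coord_vec_not] at h
  omega

theorem coord_not_add_one_le {i : Bool} {p m : ℕ × ℕ} (h : p + vec (!i) ≤ vec i + m) :
    coord p (!i) + 1 ≤ coord m (!i) := by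
  simp only [le_iff_coord i, coord_add, coord_vec_not, coord_vec_self] at h
  omega

end Coordinates

theorem CGMor.ext_model2 {E : TwoColouredGraph} {m : ℕ × ℕ} {a b : CGMor (model2 m) E}
    (h0 : a.onV ⟨0, zero_le2 m⟩ = b.onV ⟨0, zero_le2 m⟩) (hE : a.onE = b.onE) : a = b := by
  refine CGMor.ext (funext fun ⟨p, hp⟩ => ?_) hE
  rcases eq_or_ne p 0 with rfl | hp0
  · exact h0
  obtain ⟨c, hc⟩ := exists_vec_le_of_ne_zero hp0
  let ed : (model2 m).Edge := ⟨(p - vec c, c), by rwa [tsub_add_cancel_of_le hc]⟩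
  have hs : (model2 m).s ed = ⟨p, hp⟩ := Subtype.ext (tsub_add_cancel_of_le hc)
  rw [← hs, ← a.map_s, ← b.map_s, hE]

theorem model2_vec_add_edge_cases {i : Bool} {m : ℕ × ℕ} (ed : (model2 (vec i + m)).Edge) :
    (∃ w, ∃ _ : w + vec ed.1.2 ≤ m, ed.1.1 = vec i + w) ∨
      (∃ t, ∃ _ : t ≤ coord m (!i), ed.1 = (t • vec (!i), i)) ∨
      ∃ t, ∃ _ : t + 1 ≤ coord m (!i), ed.1 = (t • vec (!i), !i) := by
  obtain ⟨⟨p, b⟩, hed⟩ := ed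
  rcases vec_le_or_eq_nsmul_vec_not i p with hp | hp
  · obtain ⟨w, rfl⟩ := exists_add_of_le hp
    exact Or.inl ⟨w, by rwa [add_assoc, add_le_add_iff_left] at hed, rfl⟩
  · rcases Bool.eq_or_eq_not b i with rfl | rfl
    · exact Or.inr (Or.inl ⟨_, coord_not_le_of_le_vec_add ((le_add_vec _ _).trans hed),
        Prod.ext hp rfl⟩)
    · exact Or.inr (Or.inr ⟨_, coord_not_add_one_le hed, Prod.ext hp rfl⟩)

namespace Square2

variable {E : TwoColouredGraph} (φ : Square2 E)

theorem r_sqEdge0 (i : Bool) : E.r (φ.onE (sqEdge0 i)) = φ.onV ⟨0, zero_le2 _⟩ := by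
  cases i <;> exact φ.map_r _

theorem s_sqEdge0 (i : Bool) : E.s (φ.onE (sqEdge0 i)) = E.r (φ.onE (sqEdge1 i)) := by
  rw [φ.map_s, φ.map_r]
  cases i <;> rfl

theorem s_sqEdge1_not (i : Bool) : E.s (φ.onE (sqEdge1 (!i))) = E.s (φ.onE (sqEdge1 i)) := by
  rw [φ.map_s, φ.map_s]
  cases i <;> rfl

theorem ext_of_sqEdge {ψ : Square2 E} (i : Bool)
    (h₀ : φ.onE (sqEdge0 i) = ψ.onE (sqEdge0 i)) (h₁ : φ.onE (sqEdge1 i) = ψ.onE (sqEdge1 i))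
    (h₀' : φ.onE (sqEdge0 (!i)) = ψ.onE (sqEdge0 (!i)))
    (h₁' : φ.onE (sqEdge1 (!i)) = ψ.onE (sqEdge1 (!i))) : φ = ψ := by
  refine CGMor.ext_model2 (by rw [← r_sqEdge0 φ i, ← r_sqEdge0 ψ i, h₀])
    (funext fun ed => ?_)
  obtain ⟨⟨⟨a, c⟩, b⟩, hed⟩ := ed
  have ha : a ≤ 1 := le_trans (Nat.le_add_right _ _) hed.1
  have hc : c ≤ 1 := le_trans (Nat.le_add_right _ _) hed.2
  cases i <;> cases b <;> interval_cases a <;> interval_cases c <;>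
    first | exact h₀ | exact h₁ | exact h₀' | exact h₁' | exact absurd hed (by simp [vec])

end Square2

section Compatibility

variable {E : TwoColouredGraph} {C : Set (Square2 E)}

theorem occurs2_iff {m : ℕ × ℕ} {φ : Square2 E} {μ : CGMor (model2 m) E} :
    Occurs2 φ μ ↔ ∃ n h, starRestrict2 μ n (1, 1) h = φ := by
  constructor
  · rintro ⟨n, h, hV, hE⟩
    refine ⟨n, h, CGMor.ext (funext fun z => ?_) (funext fun ed => ?_)⟩
    · rw [← hV z]
      exact μ.onV_congr (add_comm _ _)
    · rw [← hE ed]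
      exact μ.onE_congr (Prod.ext (add_comm _ _) rfl)
  · rintro ⟨n, h, rfl⟩
    exact ⟨n, h, fun z => μ.onV_congr (add_comm _ _),
      fun ed => μ.onE_congr (Prod.ext (add_comm _ _) rfl)⟩

theorem compatible2_iff {m : ℕ × ℕ} {μ : CGMor (model2 m) E} :
    Compatible2 C μ ↔ ∀ n h, starRestrict2 μ n (1, 1) h ∈ C := by
  simp only [Compatible2, occurs2_iff, forall_exists_index]
  exact ⟨fun hμ n h => hμ _ n h rfl, fun hμ _ n h hφ => hφ ▸ hμ n h⟩

theorem starRestrict2_starRestrict2 {q : ℕ × ℕ} (μ : CGMor (model2 q) E) {p w n k : ℕ × ℕ}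
    (h : p + w ≤ q) (hn : n + k ≤ w) :
    starRestrict2 (starRestrict2 μ p w h) n k hn =
      starRestrict2 μ (p + n) k
        ((add_assoc p n k).trans_le ((add_le_add_right hn p).trans h)) :=
  CGMor.ext (funext fun _ => μ.onV_congr (add_assoc _ _ _).symm)
    (funext fun _ => μ.onE_congr (Prod.ext (add_assoc _ _ _).symm rfl))

theorem Compatible2.starRestrict2 {q : ℕ × ℕ} {μ : CGMor (model2 q) E}
    (hμ : Compatible2 C μ) {p w : ℕ × ℕ} (h : p + w ≤ q) :
    Compatible2 C (starRestrict2 μ p w h) := by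
  rw [compatible2_iff] at hμ ⊢
  intro n hn
  rw [starRestrict2_starRestrict2]
  exact hμ _ _

end Compatibility

namespace IsComplete2

variable {E : TwoColouredGraph} {C : Set (Square2 E)} {x₁ x₂ : E.Edge} {i : Bool}

theorem existsUnique_square (hC : IsComplete2 E C) (h : E.s x₁ = E.r x₂) (h₁ : E.c x₁ = i)
    (h₂ : E.c x₂ = !i) :
    ∃! φ : Square2 E, φ ∈ C ∧ φ.onE (sqEdge0 i) = x₁ ∧ φ.onE (sqEdge1 i) = x₂ := by
  subst h₁
  simpa only [eq_comm (a := x₁), eq_comm (a := x₂)] using hC x₁ x₂ h (by simp [h₂])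

theorem eq_of_mem (hC : IsComplete2 E C) {φ ψ : Square2 E} (hφ : φ ∈ C) (hψ : ψ ∈ C)
    (h₀ : φ.onE (sqEdge0 i) = ψ.onE (sqEdge0 i)) (h₁ : φ.onE (sqEdge1 i) = ψ.onE (sqEdge1 i)) :
    φ = ψ :=
  (hC.existsUnique_square (φ.s_sqEdge0 i) (φ.map_c _) (φ.map_c _)).unique ⟨hφ, rfl, rfl⟩
    ⟨hψ, h₀.symm, h₁.symm⟩

noncomputable def square (hC : IsComplete2 E C) (h : E.s x₁ = E.r x₂) (h₁ : E.c x₁ = i)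
    (h₂ : E.c x₂ = !i) : Square2 E :=
  (hC.existsUnique_square h h₁ h₂).exists.choose

theorem square_spec (hC : IsComplete2 E C) (h : E.s x₁ = E.r x₂) (h₁ : E.c x₁ = i)
    (h₂ : E.c x₂ = !i) :
    hC.square h h₁ h₂ ∈ C ∧ (hC.square h h₁ h₂).onE (sqEdge0 i) = x₁ ∧
      (hC.square h h₁ h₂).onE (sqEdge1 i) = x₂ :=
  (hC.existsUnique_square h h₁ h₂).exists.choose_spec

end IsComplete2

section Axis

variable {E : TwoColouredGraph} {m : ℕ × ℕ} (μ : CGMor (model2 m) E) (b : Bool)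

def axisVertex (t : ℕ) (ht : t ≤ coord m b) : E.V :=
  μ.onV ⟨t • vec b, nsmul_vec_le ht⟩

def axisEdge (t : ℕ) (ht : t + 1 ≤ coord m b) : E.Edge :=
  μ.onE ⟨(t • vec b, b), by rw [← succ_nsmul]; exact nsmul_vec_le ht⟩

variable {b} {t : ℕ} (ht : t + 1 ≤ coord m b)

theorem axisEdge_r : E.r (axisEdge μ b t ht) = axisVertex μ b t (Nat.le_of_succ_le ht) :=
  μ.map_r _

theorem axisEdge_s : E.s (axisEdge μ b t ht) = axisVertex μ b (t + 1) ht :=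
  (μ.map_s _).trans (μ.onV_congr (succ_nsmul _ _).symm)

theorem axisEdge_c : E.c (axisEdge μ b t ht) = b :=
  μ.map_c _

end Axis

namespace ExtendByEdge

variable {E : TwoColouredGraph} {C : Set (Square2 E)} (hC : IsComplete2 E C) {m : ℕ × ℕ}
  (lam : CGMor (model2 m) E) {i : Bool} {e : E.Edge} (hi : E.c e = i)
  (he : E.s e = lam.onV ⟨0, zero_le2 m⟩)

/-- The edges `fₜ` of the proof sketch, with `gₜ = axisEdge lam (!i) t`. -/
noncomputable def rowEdge : (t : ℕ) → (ht : t ≤ coord m (!i)) →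
    {f : E.Edge // E.c f = i ∧ E.s f = axisVertex lam (!i) t ht}
  | 0, _ => ⟨e, hi, he.trans (lam.onV_congr (zero_nsmul _).symm)⟩
  | t + 1, ht =>
    let f := rowEdge t (Nat.le_of_succ_le ht)
    let φ := hC.square (f.2.2.trans (axisEdge_r lam ht).symm) f.2.1 (axisEdge_c lam ht)
    ⟨φ.onE (sqEdge1 (!i)), (φ.map_c _).trans (Bool.not_not i),
      (φ.s_sqEdge1_not i).trans ((congrArg E.s (hC.square_spec _ _ _).2.2).trans
        (axisEdge_s lam ht))⟩

noncomputable def rowSquare (t : ℕ) (ht : t + 1 ≤ coord m (!i)) : Square2 E :=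
  hC.square ((rowEdge hC lam hi he t (Nat.le_of_succ_le ht)).2.2.trans
    (axisEdge_r lam ht).symm) (rowEdge hC lam hi he t _).2.1 (axisEdge_c lam ht)

section Row

variable {hC lam hi he} {t : ℕ} (ht : t + 1 ≤ coord m (!i))

theorem rowEdge_succ :
    (rowEdge hC lam hi he (t + 1) ht).1 = (rowSquare hC lam hi he t ht).onE (sqEdge1 (!i)) :=
  rfl

theorem rowSquare_mem : rowSquare hC lam hi he t ht ∈ C :=
  (hC.square_spec _ _ _).1

theorem rowSquare_sqEdge0 : (rowSquare hC lam hi he t ht).onE (sqEdge0 i) =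
    (rowEdge hC lam hi he t (Nat.le_of_succ_le ht)).1 :=
  (hC.square_spec _ _ _).2.1

theorem rowSquare_sqEdge1 :
    (rowSquare hC lam hi he t ht).onE (sqEdge1 i) = axisEdge lam (!i) t ht :=
  (hC.square_spec _ _ _).2.2

end Row

noncomputable def onV (z : (model2 (vec i + m)).V) : E.V :=
  if vec i ≤ z.1 then lam.onV ⟨z.1 - vec i, tsub_le_iff_left.2 z.2⟩
  else E.r (rowEdge hC lam hi he (coord z.1 (!i)) (coord_not_le_of_le_vec_add z.2)).1

noncomputable def onE (ed : (model2 (vec i + m)).Edge) : E.Edge :=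
  if h : vec i ≤ ed.1.1 then
    lam.onE ⟨(ed.1.1 - vec i, ed.1.2), by
      rw [tsub_add_eq_add_tsub h]; exact tsub_le_iff_left.2 ed.2⟩
  else if hb : ed.1.2 = i then
    (rowEdge hC lam hi he (coord ed.1.1 (!i))
      (coord_not_le_of_le_vec_add ((le_add_vec _ _).trans ed.2))).1
  else
    (rowSquare hC lam hi he (coord ed.1.1 (!i))
      (coord_not_add_one_le (Bool.eq_not_iff.2 hb ▸ ed.2))).onE (sqEdge0 (!i))

variable {hC lam hi he}

theorem onV_of_eq_add (z : (model2 (vec i + m)).V) {w : ℕ × ℕ} (hw : w ≤ m)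
    (hz : z.1 = vec i + w) : onV hC lam hi he z = lam.onV ⟨w, hw⟩ := by
  rw [onV, if_pos (hz ▸ le_self_add2 _ _)]
  exact lam.onV_congr (by simp [hz])

theorem onV_of_eq_nsmul (z : (model2 (vec i + m)).V) {t : ℕ} (ht : t ≤ coord m (!i))
    (hz : z.1 = t • vec (!i)) : onV hC lam hi he z = E.r (rowEdge hC lam hi he t ht).1 := by
  have hzt : coord z.1 (!i) = t := by simp [hz, -nsmul_eq_mul]
  rw [onV, if_neg (hz ▸ not_vec_le_nsmul_vec_not i t)]
  subst hzt
  rfl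

theorem onE_of_eq_add {ed : (model2 (vec i + m)).Edge} {w : ℕ × ℕ}
    (hw : w + vec ed.1.2 ≤ m) (hed : ed.1.1 = vec i + w) :
    onE hC lam hi he ed = lam.onE ⟨(w, ed.1.2), hw⟩ := by
  rw [onE, dif_pos (hed ▸ le_self_add2 _ _)]
  exact lam.onE_congr (Prod.ext (by simp [hed]) rfl)

theorem onE_of_eq_nsmul_self {ed : (model2 (vec i + m)).Edge} {t : ℕ}
    (ht : t ≤ coord m (!i)) (hed : ed.1 = (t • vec (!i), i)) :
    onE hC lam hi he ed = (rowEdge hC lam hi he t ht).1 := by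
  have hzt : coord ed.1.1 (!i) = t := by simp [hed, -nsmul_eq_mul]
  rw [onE, dif_neg (by rw [hed]; exact not_vec_le_nsmul_vec_not i t), dif_pos (by rw [hed])]
  subst hzt
  rfl

theorem onE_of_eq_nsmul_not {ed : (model2 (vec i + m)).Edge} {t : ℕ}
    (ht : t + 1 ≤ coord m (!i)) (hed : ed.1 = (t • vec (!i), !i)) :
    onE hC lam hi he ed = (rowSquare hC lam hi he t ht).onE (sqEdge0 (!i)) := by
  have hzt : coord ed.1.1 (!i) = t := by simp [hed, -nsmul_eq_mul]
  rw [onE, dif_neg (by rw [hed]; exact not_vec_le_nsmul_vec_not i t),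
    dif_neg (by rw [hed]; simp)]
  subst hzt
  rfl

theorem map_r (ed : (model2 (vec i + m)).Edge) :
    E.r (onE hC lam hi he ed) = onV hC lam hi he ((model2 _).r ed) := by
  rcases model2_vec_add_edge_cases ed with ⟨w, hw, hed⟩ | ⟨t, ht, hed⟩ | ⟨t, ht, hed⟩
  · rw [onE_of_eq_add hw hed]
    exact (lam.map_r _).trans (onV_of_eq_add _ _ hed).symm
  · rw [onE_of_eq_nsmul_self ht hed, onV_of_eq_nsmul _ ht (congrArg Prod.fst hed)]
  · rw [onE_of_eq_nsmul_not ht hed, Square2.r_sqEdge0, ← Square2.r_sqEdge0 _ i,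
      rowSquare_sqEdge0, onV_of_eq_nsmul _ _ (congrArg Prod.fst hed)]

theorem map_s (ed : (model2 (vec i + m)).Edge) :
    E.s (onE hC lam hi he ed) = onV hC lam hi he ((model2 _).s ed) := by
  rcases model2_vec_add_edge_cases ed with ⟨w, hw, hed⟩ | ⟨t, ht, hed⟩ | ⟨t, ht, hed⟩
  · rw [onE_of_eq_add hw hed]
    exact (lam.map_s _).trans
      (onV_of_eq_add _ hw (by simp only [model2, hed, add_assoc])).symm
  · rw [onE_of_eq_nsmul_self ht hed, (rowEdge hC lam hi he t ht).2.2,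
      onV_of_eq_add _ (nsmul_vec_le ht) (by simp only [model2, hed, add_comm])]
    rfl
  · rw [onE_of_eq_nsmul_not ht hed, Square2.s_sqEdge0, ← rowEdge_succ,
      onV_of_eq_nsmul _ ht (by simp only [model2, hed, succ_nsmul])]

theorem map_c (ed : (model2 (vec i + m)).Edge) :
    E.c (onE hC lam hi he ed) = (model2 _).c ed := by
  rcases model2_vec_add_edge_cases ed with ⟨w, hw, hed⟩ | ⟨t, ht, hed⟩ | ⟨t, ht, hed⟩
  · rw [onE_of_eq_add hw hed]
    exact lam.map_c _
  · rw [onE_of_eq_nsmul_self ht hed, (rowEdge hC lam hi he t ht).2.1]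
    exact (congrArg Prod.snd hed).symm
  · rw [onE_of_eq_nsmul_not ht hed, CGMor.map_c]
    exact (congrArg Prod.snd hed).symm

end ExtendByEdge

section Extension

open ExtendByEdge

variable {E : TwoColouredGraph} {C : Set (Square2 E)} (hC : IsComplete2 E C) {m : ℕ × ℕ}
  (lam : CGMor (model2 m) E) {i : Bool} {e : E.Edge} (hi : E.c e = i)
  (he : E.s e = lam.onV ⟨0, zero_le2 m⟩)

noncomputable def extendByEdge : CGMor (model2 (vec i + m)) E where
  onV := onV hC lam hi he
  onE := onE hC lam hi he
  map_r := map_r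
  map_s := map_s
  map_c := map_c

theorem extendByEdge_starRestrict2 :
    starRestrict2 (extendByEdge hC lam hi he) (vec i) m le_rfl = lam :=
  CGMor.ext (funext fun z => onV_of_eq_add _ z.2 rfl) (funext fun ed => onE_of_eq_add ed.2 rfl)

theorem extendByEdge_onV_zero : (extendByEdge hC lam hi he).onV ⟨0, zero_le2 _⟩ = E.r e :=
  onV_of_eq_nsmul _ (Nat.zero_le _) (zero_nsmul _).symm

theorem extendByEdge_onE_zero (h : 0 + vec i ≤ vec i + m) :
    (extendByEdge hC lam hi he).onE ⟨(0, i), h⟩ = e :=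
  onE_of_eq_nsmul_self (Nat.zero_le _) (Prod.ext (zero_nsmul _).symm rfl)

theorem starRestrict2_extendByEdge_of_eq_nsmul {n : ℕ × ℕ} {t : ℕ}
    (ht : t + 1 ≤ coord m (!i)) (hn : n = t • vec (!i)) (h : n + (1, 1) ≤ vec i + m) :
    starRestrict2 (extendByEdge hC lam hi he) n (1, 1) h = rowSquare hC lam hi he t ht := by
  subst hn
  have hw : t • vec (!i) + vec (!i) ≤ m := by
    rw [← succ_nsmul]
    exact nsmul_vec_le ht
  refine Square2.ext_of_sqEdge _ i ?_ ?_ ?_ ?_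
  · exact (onE_of_eq_nsmul_self _ (Prod.ext (add_zero _) rfl)).trans
      (rowSquare_sqEdge0 ht).symm
  · exact (onE_of_eq_add hw (add_comm _ _)).trans (rowSquare_sqEdge1 ht).symm
  · exact onE_of_eq_nsmul_not ht (Prod.ext (add_zero _) rfl)
  · exact (onE_of_eq_nsmul_self ht (Prod.ext (succ_nsmul _ _).symm (Bool.not_not i))).trans
      (rowEdge_succ ht)

theorem extendByEdge_compatible2 (hlam : Compatible2 C lam) :
    Compatible2 C (extendByEdge hC lam hi he) := by
  rw [compatible2_iff] at hlam ⊢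
  intro n hn
  rcases vec_le_or_eq_nsmul_vec_not i n with hni | hn'
  · obtain ⟨w, rfl⟩ := exists_add_of_le hni
    have hw : w + (1, 1) ≤ m := by rwa [add_assoc, add_le_add_iff_left] at hn
    have := starRestrict2_starRestrict2 (extendByEdge hC lam hi he) le_rfl hw
    rw [extendByEdge_starRestrict2] at this
    exact this ▸ hlam w hw
  · have ht : coord n (!i) + 1 ≤ coord m (!i) := by
      rw [hn', nsmul_vec_not_add_le_iff (by simp)] at hn
      simpa using hn
    rw [starRestrict2_extendByEdge_of_eq_nsmul hC lam hi he ht hn']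
    exact rowSquare_mem ht

end Extension

section Uniqueness

variable {E : TwoColouredGraph} {C : Set (Square2 E)} {m : ℕ × ℕ} {i : Bool}
  {μ ν : CGMor (model2 (vec i + m)) E}

theorem starRestrict2_one_one_eq (hC : IsComplete2 E C) (hμ : Compatible2 C μ)
    (hν : Compatible2 C ν)
    (hstar : starRestrict2 μ (vec i) m le_rfl = starRestrict2 ν (vec i) m le_rfl)
    {n : ℕ × ℕ} (h : n + (1, 1) ≤ vec i + m)
    (hn : ∀ ed : (model2 (vec i + m)).Edge, ed.1 = (n, i) → μ.onE ed = ν.onE ed) :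
    starRestrict2 μ n (1, 1) h = starRestrict2 ν n (1, 1) h := by
  rw [compatible2_iff] at hμ hν
  have hb : n + vec (!i) ≤ m := by
    rwa [← vec_add_vec_not i, add_left_comm, add_le_add_iff_left] at h
  refine hC.eq_of_mem (hμ n h) (hν n h) (hn _ (Prod.ext (add_zero n) rfl)) ?_
  calc μ.onE ⟨(n + vec i, !i), _⟩
      = (starRestrict2 μ (vec i) m le_rfl).onE ⟨(n, !i), hb⟩ :=
        μ.onE_congr (Prod.ext (add_comm _ _) rfl)
    _ = (starRestrict2 ν (vec i) m le_rfl).onE ⟨(n, !i), hb⟩ := by rw [hstar]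
    _ = ν.onE ⟨(n + vec i, !i), _⟩ := ν.onE_congr (Prod.ext (add_comm _ _) rfl)

theorem row_onE_eq (hC : IsComplete2 E C) (hμ : Compatible2 C μ) (hν : Compatible2 C ν)
    (hstar : starRestrict2 μ (vec i) m le_rfl = starRestrict2 ν (vec i) m le_rfl)
    (h0 : ∀ ed : (model2 (vec i + m)).Edge, ed.1 = (0, i) → μ.onE ed = ν.onE ed) (t : ℕ) :
    ∀ ed : (model2 (vec i + m)).Edge, ed.1 = (t • vec (!i), i) → μ.onE ed = ν.onE ed := by
  induction t with
  | zero => exact fun ed hed => h0 ed (by rw [hed, zero_nsmul])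
  | succ t ih =>
    intro ed hed
    have h : t • vec (!i) + (1, 1) ≤ vec i + m := by
      have := ed.2
      rw [hed, nsmul_vec_not_add_le_iff (by simp)] at this
      rw [nsmul_vec_not_add_le_iff (by simp)]
      simpa using this
    have hsq := starRestrict2_one_one_eq hC hμ hν hstar h ih
    have hpos : ed.1 = (t • vec (!i) + vec (!i), !!i) := by rw [hed, succ_nsmul, Bool.not_not]
    calc μ.onE ed = (starRestrict2 μ _ (1, 1) h).onE (sqEdge1 (!i)) := μ.onE_congr hpos
      _ = (starRestrict2 ν _ (1, 1) h).onE (sqEdge1 (!i)) := by rw [hsq]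
      _ = ν.onE ed := ν.onE_congr hpos.symm

theorem eq_of_starRestrict2_eq (hC : IsComplete2 E C) (hμ : Compatible2 C μ)
    (hν : Compatible2 C ν)
    (hstar : starRestrict2 μ (vec i) m le_rfl = starRestrict2 ν (vec i) m le_rfl)
    (h : 0 + vec i ≤ vec i + m) (h0 : μ.onE ⟨(0, i), h⟩ = ν.onE ⟨(0, i), h⟩) : μ = ν := by
  have hrow := row_onE_eq hC hμ hν hstar
    fun ed hed => (μ.onE_congr hed).trans (h0.trans (ν.onE_congr hed.symm))
  refine CGMor.ext_model2 ?_ (funext fun ed => ?_)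
  · exact (μ.map_r ⟨(0, i), h⟩).symm.trans ((congrArg E.r h0).trans (ν.map_r _))
  rcases model2_vec_add_edge_cases ed with ⟨w, hw, hed⟩ | ⟨t, ht, hed⟩ | ⟨t, ht, hed⟩
  · calc μ.onE ed = (starRestrict2 μ (vec i) m le_rfl).onE ⟨(w, ed.1.2), hw⟩ :=
          μ.onE_congr (Prod.ext hed rfl)
      _ = (starRestrict2 ν (vec i) m le_rfl).onE ⟨(w, ed.1.2), hw⟩ := by rw [hstar]
      _ = ν.onE ed := ν.onE_congr (Prod.ext hed.symm rfl)
  · exact hrow t ed hed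
  · have h : t • vec (!i) + (1, 1) ≤ vec i + m := by
      rw [nsmul_vec_not_add_le_iff (by simp)]
      simpa using ht
    have hsq := starRestrict2_one_one_eq hC hμ hν hstar h (hrow t)
    have hpos : ed.1 = (t • vec (!i) + 0, !i) := by rw [hed, add_zero]
    calc μ.onE ed = (starRestrict2 μ _ (1, 1) h).onE (sqEdge0 (!i)) := μ.onE_congr hpos
      _ = (starRestrict2 ν _ (1, 1) h).onE (sqEdge0 (!i)) := by rw [hsq]
      _ = ν.onE ed := ν.onE_congr hpos.symm

end Uniqueness

section Traversal

variable {E : TwoColouredGraph} {C : Set (Square2 E)} {v : E.V} {e : E.Edge}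
  {x : List E.Edge}

theorem IsPathFrom.of_cons (h : IsPathFrom E v (e :: x)) :
    E.r e = v ∧ IsPathFrom E (E.s e) x := by
  obtain ⟨hhead, hchain⟩ := h
  obtain ⟨hlink, htail⟩ := List.isChain_cons.mp hchain
  exact ⟨hhead e rfl, fun f hf => (hlink f hf).symm, htail⟩

theorem Traverses2.of_cons {μ : CGMor (model2 (vec (E.c e) + deg2 E x)) E}
    (h : Traverses2 E μ v (e :: x)) :
    μ.onE ⟨(0, E.c e), (zero_add _).trans_le (le_self_add2 _ _)⟩ = e ∧
      Traverses2 E (starRestrict2 μ (vec (E.c e)) (deg2 E x) le_rfl) (E.s e) x := by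
  obtain ⟨_, _, hedges⟩ := h
  have he : μ.onE ⟨(0, E.c e), (zero_add _).trans_le (le_self_add2 _ _)⟩ = e :=
    hedges 0 (Nat.succ_pos _)
  refine ⟨he, rfl, ?_, fun n hn => hedges (n + 1) (Nat.succ_lt_succ hn)⟩
  exact (μ.onV_congr (add_comm _ _)).trans ((μ.map_s _).symm.trans (congrArg E.s he))

theorem Traverses2.extendByEdge (hC : IsComplete2 E C) {lam : CGMor (model2 (deg2 E x)) E}
    (he : E.s e = lam.onV ⟨0, zero_le2 _⟩) (h : Traverses2 E lam (E.s e) x) (hv : E.r e = v) :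
    Traverses2 E (extendByEdge hC lam rfl he) v (e :: x) := by
  obtain ⟨_, _, hedges⟩ := h
  refine ⟨rfl, (extendByEdge_onV_zero hC lam rfl he).trans hv, ?_⟩
  rintro (_ | n) hn
  · exact extendByEdge_onE_zero hC lam rfl he _
  · exact (ExtendByEdge.onE_of_eq_add _ rfl).trans (hedges n (Nat.lt_of_succ_lt_succ hn))

theorem exists_compatible2_traverses2 (hC : IsComplete2 E C) :
    ∀ (x : List E.Edge) (v : E.V), IsPathFrom E v x →
      ∃ lam : CGMor (model2 (deg2 E x)) E, Compatible2 C lam ∧ Traverses2 E lam v x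
  | [], v, _ =>
    ⟨idMor2 E v, idMor2_compatible E C v, rfl, rfl, fun _ hn => absurd hn (by simp)⟩
  | e :: x, _, hx => by
    obtain ⟨hv, hx⟩ := hx.of_cons
    obtain ⟨lam, hlam, htr⟩ := exists_compatible2_traverses2 hC x (E.s e) hx
    have he : E.s e = lam.onV ⟨0, zero_le2 _⟩ := htr.2.1.symm
    exact ⟨extendByEdge hC lam rfl he, extendByEdge_compatible2 hC lam rfl he hlam,
      htr.extendByEdge hC he hv⟩

theorem Traverses2.eq_of_compatible2 (hC : IsComplete2 E C) {m : ℕ × ℕ}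
    {μ ν : CGMor (model2 m) E} (hμ : Compatible2 C μ) (hν : Compatible2 C ν)
    (hμx : Traverses2 E μ v x) (hνx : Traverses2 E ν v x) : μ = ν := by
  induction x generalizing v m with
  | nil =>
    obtain ⟨rfl, hμ0, -⟩ := hμx
    exact CGMor.ext_model2 (hμ0.trans hνx.2.1.symm)
      (funext fun ed => (model2_zero_no_edge ed).elim)
  | cons e x ih =>
    obtain ⟨rfl, -⟩ := id hμx
    have hμ' := Traverses2.of_cons hμx
    have hν' := Traverses2.of_cons hνx
    exact eq_of_starRestrict2_eq hC hμ hν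
      (ih (hμ.starRestrict2 _) (hν.starRestrict2 _) hμ'.2 hν'.2) _ (hμ'.1.trans hν'.1.symm)

end Traversal

theorem unique_traversal_2 (E : TwoColouredGraph) (C : Set (Square2 E))
    (hC : IsComplete2 E C) (v : E.V) (x : List E.Edge) (hx : IsPathFrom E v x) :
    ∃! lam : CGMor (model2 (deg2 E x)) E, Compatible2 C lam ∧ Traverses2 E lam v x := by
  obtain ⟨lam, hlam, htr⟩ := exists_compatible2_traverses2 hC x v hx
  exact ⟨lam, ⟨hlam, htr⟩, fun μ hμ => hμ.2.eq_of_compatible2 hC hμ.1 hlam htr⟩
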